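/- arXiv:1404.2371 — 5 statements merged into one kernel-verified Lean document; each statement's English description precedes it below -/
import Mathlib

section
/- Let n ≥ 2 be an integer. For all reals L, U, a, x with 0 < L, L ≤ a, a ≤ U and x = a^n, the Secant–Newton map is contracting, i.e. setting L* = L + (x − L^n)/(∑_{i=0}^{n-1} L^{n-1-i} U^i) and U* = U + (x − U^n)/(n·U^{n-1}), one has L ≤ L* , L* ≤ a, a ≤ U* and U* ≤ U. -/
/-!
Both updates add to an endpoint `c` the quantity `(aⁿ - cⁿ) / d`, whose sign is that of `a - c`,
so each endpoint moves towards `a`. It does not overshoot because `aⁿ - cⁿ ≤ (a - c) * d` in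
both cases: factor `aⁿ - cⁿ = (a - c) ∑ aⁱ c^(n-1-i)` and bound the sum termwise by the secant
sum and by `n U^(n-1)` respectively, both because `a ≤ U`.
-/

open Finset

theorem pow_sub_pow_le_sub_mul_sum {α : Type*} [CommRing α] [PartialOrder α] [IsOrderedRing α]
    {L a U : α} (hL : 0 ≤ L) (hLa : L ≤ a) (haU : a ≤ U) (n : ℕ) :
    a ^ n - L ^ n ≤ (a - L) * ∑ i ∈ range n, L ^ (n - 1 - i) * U ^ i := by
  rw [← geom_sum₂_mul, mul_comm]
  refine mul_le_mul_of_nonneg_left (sum_le_sum fun i _ => ?_) (sub_nonneg.2 hLa)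
  rw [mul_comm]
  gcongr
  exact hL.trans hLa

theorem pow_sub_pow_le_sub_mul_deriv {α : Type*} [CommRing α] [LinearOrder α]
    [IsStrictOrderedRing α] {a U : α} (ha : 0 ≤ a) (haU : a ≤ U) (n : ℕ) :
    U ^ n - a ^ n ≤ (U - a) * (n * U ^ (n - 1)) := by
  have := abs_pow_sub_pow_le U a n
  rwa [abs_of_nonneg (sub_nonneg.2 (pow_le_pow_left₀ ha haU n)), abs_of_nonneg (sub_nonneg.2 haU),
    abs_of_nonneg (ha.trans haU), abs_of_nonneg ha, max_eq_left haU, mul_assoc] at this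

theorem secant_newton_contracting_general (n : ℕ) :
    ∀ L U a x : ℝ, 0 < L → L ≤ a → a ≤ U → x = a ^ n →
      L ≤ L + (x - L ^ n) / (∑ i ∈ Finset.range n, L ^ (n-1-i) * U ^ i) ∧
      L + (x - L ^ n) / (∑ i ∈ Finset.range n, L ^ (n-1-i) * U ^ i) ≤ a ∧
      a ≤ U + (x - U ^ n) / (n * U ^ (n-1)) ∧
      U + (x - U ^ n) / (n * U ^ (n-1)) ≤ U := by
  rintro L U a _ hL hLa haU rfl
  have ha : 0 ≤ a := hL.le.trans hLa
  have hS : 0 ≤ ∑ i ∈ range n, L ^ (n - 1 - i) * U ^ i :=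
    sum_nonneg fun i _ => by have := ha.trans haU; positivity
  have hD : 0 ≤ (n : ℝ) * U ^ (n - 1) := by have := ha.trans haU; positivity
  have hsecant := pow_sub_pow_le_sub_mul_sum hL.le hLa haU n
  have hnewton := pow_sub_pow_le_sub_mul_deriv ha haU n
  have hLn : L ^ n ≤ a ^ n := pow_le_pow_left₀ hL.le hLa n
  have hUn : a ^ n ≤ U ^ n := pow_le_pow_left₀ ha haU n
  refine ⟨?_, ?_, ?_, ?_⟩
  · exact le_add_of_nonneg_right (div_nonneg (sub_nonneg.2 hLn) hS)
  · have := div_le_of_le_mul₀ hS (sub_nonneg.2 hLa) hsecant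
    linarith
  · have := div_le_of_le_mul₀ hD (sub_nonneg.2 haU) hnewton
    rw [← neg_sub, neg_div]
    linarith
  · exact add_le_of_nonpos_right (div_nonpos_of_nonpos_of_nonneg (sub_nonpos.2 hUn) hD)

theorem secant_newton_contracting (n : ℕ) (hn : 2 ≤ n) :
    ∀ L U a x : ℝ, 0 < L → L ≤ a → a ≤ U → x = a ^ n →
      L ≤ L + (x - L ^ n) / (∑ i ∈ Finset.range n, L ^ (n-1-i) * U ^ i) ∧
      L + (x - L ^ n) / (∑ i ∈ Finset.range n, L ^ (n-1-i) * U ^ i) ≤ a ∧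
      a ≤ U + (x - U ^ n) / (n * U ^ (n-1)) ∧
      U + (x - U ^ n) / (n * U ^ (n-1)) ≤ U :=
  secant_newton_contracting_general n
end

section
/- Let n ≥ 2 be an integer and let p = (p_0,…,p_{2n}) be a real coefficient vector such that for all reals L, U, a with 0 < L ≤ a ≤ U and x = a^n one has L + (x − L^n)/(∑_{i=0}^{n-1} p_{n+1+i} L^{n-1-i} U^i) ≤ a. Then for all reals L, U with 0 < L < U, one has 1/(∑_{i=0}^{n-1} p_{n+1+i} L^{n-1-i} U^i) ≤ 1/(∑_{i=0}^{n-1} U^{n-1-i} L^i). -/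
/-!
Taking `a = U`, the hypothesis says that the step `(U ^ n - L ^ n) / D` taken by the update
does not overshoot `U - L`. Since `U ^ n - L ^ n = S * (U - L)` with `S = ∑ U ^ (n-1-i) L ^ i`,
this means `S / D ≤ 1`, i.e. `1 / D ≤ 1 / S`.
-/

open Finset

lemma sum_pow_mul_pow_mul_sub {R : Type*} [CommRing R] (x y : R) (n : ℕ) :
    (∑ i ∈ range n, y ^ (n - 1 - i) * x ^ i) * (y - x) = y ^ n - x ^ n := by
  simp_rw [mul_comm (y ^ _), ← geom_sum₂_comm y x n]
  exact geom_sum₂_mul y x n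

lemma sum_pow_mul_pow_pos {R : Type*} [CommSemiring R] [PartialOrder R] [IsStrictOrderedRing R]
    {x y : R} (hx : 0 < x) (hy : 0 < y) {n : ℕ} (hn : n ≠ 0) :
    0 < ∑ i ∈ range n, y ^ (n - 1 - i) * x ^ i :=
  sum_pos (fun _ _ => by positivity) (nonempty_range_iff.2 hn)

lemma one_div_le_one_div_of_mul_div_le {K : Type*} [Field K] [LinearOrder K]
    [IsStrictOrderedRing K] {S D d : K} (hS : 0 < S) (hd : 0 < d) (h : S * d / D ≤ d) :
    1 / D ≤ 1 / S := by
  have hSD : S / D * d ≤ 1 * d := by rwa [one_mul, div_mul_eq_mul_div]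
  rw [le_div_iff₀ hS, one_div_mul_eq_div]
  exact le_of_mul_le_mul_right hSD hd

theorem lower_denominator_bound (n : ℕ) (hn : 2 ≤ n) (p : ℕ → ℝ)
    (h : ∀ L U a : ℝ, 0 < L → L ≤ a → a ≤ U →
      L + (a ^ n - L ^ n) / (∑ i ∈ Finset.range n, p (n+1+i) * L ^ (n-1-i) * U ^ i) ≤ a) :
    ∀ L U : ℝ, 0 < L → L < U →
      1 / (∑ i ∈ Finset.range n, p (n+1+i) * L ^ (n-1-i) * U ^ i) ≤
      1 / (∑ i ∈ Finset.range n, U ^ (n-1-i) * L ^ i) := by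
  intro L U hL hLU
  have hstep := h L U U hL hLU.le le_rfl
  rw [← sum_pow_mul_pow_mul_sub L U n] at hstep
  exact one_div_le_one_div_of_mul_div_le
    (sum_pow_mul_pow_pos hL (hL.trans hLU) (by omega)) (sub_pos.2 hLU) (by linarith)
end

section
/- Let n ≥ 2 be an integer and let p = (p_0,…,p_{2n}) and q = (q_0,…,q_{2n}) be real coefficient vectors such that the n-th degree map R_{p,q} is contracting. Then for all reals L, U, a with 0 < L ≤ a ≤ U and x = a^n, the lower output L′ of R_{p,q} satisfies L′ ≤ L*, where L* = L + (x − L^n)/(∑_{i=0}^{n-1} L^{n-1-i} U^i) is the lower output of the Secant–Newton map. -/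
/-- Lower output `L'` of the n-th degree map `R_{p,q}` on `([L,U], x)`. -/
noncomputable def lowerOut (n : ℕ) (p : ℕ → ℝ) (L U x : ℝ) : ℝ :=
  L + (x + ∑ i ∈ Finset.range (n+1), p i * L ^ (n - i) * U ^ i) /
      (∑ i ∈ Finset.range n, p (n+1+i) * L ^ (n-1-i) * U ^ i)

/-- Upper output `U'` of the n-th degree map `R_{p,q}` on `([L,U], x)`. -/
noncomputable def upperOut (n : ℕ) (q : ℕ → ℝ) (L U x : ℝ) : ℝ :=
  U + (x + ∑ i ∈ Finset.range (n+1), q i * U ^ (n - i) * L ^ i) /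
      (∑ i ∈ Finset.range n, q (n+1+i) * U ^ (n-1-i) * L ^ i)

/-- The n-th degree map `R_{p,q}` is contracting:
for all `0 < L ≤ a ≤ U` with `x = a^n`, `L ≤ L' ≤ a ≤ U' ≤ U`. -/
def Contracting (n : ℕ) (p q : ℕ → ℝ) : Prop :=
  ∀ L U a : ℝ, 0 < L → L ≤ a → a ≤ U →
    L ≤ lowerOut n p L U (a ^ n) ∧ lowerOut n p L U (a ^ n) ≤ a ∧
    a ≤ upperOut n q L U (a ^ n) ∧ upperOut n q L U (a ^ n) ≤ U

/-!
Contraction at `a = L` forces the lower output to fix `L`, which pins the numerator polynomial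
to `-L^n` whenever the denominator `D` is nonzero; so `L' = L + (a^n - L^n) / D`. Contraction
at `a = U` then gives `(U^n - L^n) / D ≤ U - L`, and since `U^n - L^n = S (U - L)` for the
secant denominator `S`, this says `S ≤ D` when `D > 0`. Hence
`(a^n - L^n) / D ≤ (a^n - L^n) / S`; when `D ≤ 0` the left side is not even positive.
-/

open Finset

noncomputable section

def lowerNum (n : ℕ) (p : ℕ → ℝ) (L U : ℝ) : ℝ :=
  ∑ i ∈ range (n+1), p i * L ^ (n - i) * U ^ i

def lowerDen (n : ℕ) (p : ℕ → ℝ) (L U : ℝ) : ℝ :=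
  ∑ i ∈ range n, p (n+1+i) * L ^ (n-1-i) * U ^ i

def secantDen (n : ℕ) (L U : ℝ) : ℝ :=
  ∑ i ∈ range n, L ^ (n-1-i) * U ^ i

end

theorem lowerOut_eq_lowerNum_lowerDen (n : ℕ) (p : ℕ → ℝ) (L U x : ℝ) :
    lowerOut n p L U x = L + (x + lowerNum n p L U) / lowerDen n p L U :=
  rfl

theorem secantDen_nonneg (n : ℕ) {L U : ℝ} (hL : 0 ≤ L) (hU : 0 ≤ U) : 0 ≤ secantDen n L U :=
  sum_nonneg fun _ _ => by positivity

theorem secantDen_mul_sub (n : ℕ) (L U : ℝ) : secantDen n L U * (U - L) = U ^ n - L ^ n := by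
  rw [← geom_sum₂_mul U L, secantDen]
  simp only [mul_comm (L ^ _)]

section Contracting

variable {n : ℕ} {p q : ℕ → ℝ} (hc : Contracting n p q) {L U : ℝ}
include hc

theorem Contracting.lowerOut_eq (hL : 0 < L) (hLU : L ≤ U) (x : ℝ) :
    lowerOut n p L U x = L + (x - L ^ n) / lowerDen n p L U := by
  have hbounds := hc L U L hL le_rfl hLU
  have hfix : lowerOut n p L U (L ^ n) = L := le_antisymm hbounds.2.1 hbounds.1
  rw [lowerOut_eq_lowerNum_lowerDen] at hfix ⊢
  rcases eq_or_ne (lowerDen n p L U) 0 with hD | hD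
  · simp [hD] -- `/ 0 = 0` makes both sides `L`
  · have hnum : L ^ n + lowerNum n p L U = 0 :=
      (div_eq_zero_iff.mp (by linarith)).resolve_right hD
    rw [show x + lowerNum n p L U = x - L ^ n by linarith]

theorem Contracting.pow_sub_div_lowerDen_le (hL : 0 < L) (hLU : L ≤ U) :
    (U ^ n - L ^ n) / lowerDen n p L U ≤ U - L := by
  have hupper := (hc L U U hL hLU le_rfl).2.1
  rw [hc.lowerOut_eq hL hLU] at hupper
  linarith

theorem Contracting.div_lowerDen_le_div_secantDen {a : ℝ} (hL : 0 < L) (hLa : L ≤ a)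
    (haU : a ≤ U) :
    (a ^ n - L ^ n) / lowerDen n p L U ≤ (a ^ n - L ^ n) / secantDen n L U := by
  have hLU := hLa.trans haU
  have hS := secantDen_nonneg n hL.le (hL.trans_le hLU).le
  have hLa_pow : L ^ n ≤ a ^ n := pow_le_pow_left₀ hL.le hLa n
  have haU_pow : a ^ n ≤ U ^ n := pow_le_pow_left₀ (hL.le.trans hLa) haU n
  rcases hLa_pow.eq_or_lt with heq | hlt
  · simp [heq]
  rcases le_or_gt (lowerDen n p L U) 0 with hD | hD
  · exact (div_nonpos_of_nonneg_of_nonpos (by linarith) hD).trans (by positivity)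
  have hgap : 0 < secantDen n L U * (U - L) := by rw [secantDen_mul_sub]; linarith
  have hUL : 0 < U - L := pos_of_mul_pos_right hgap hS
  have hSpos : 0 < secantDen n L U := pos_of_mul_pos_left hgap hUL.le
  have hSD : secantDen n L U ≤ lowerDen n p L U := by
    have h := hc.pow_sub_div_lowerDen_le hL hLU
    rw [div_le_iff₀ hD, ← secantDen_mul_sub, mul_comm (U - L)] at h
    exact le_of_mul_le_mul_right h hUL
  exact div_le_div_of_nonneg_left (by linarith) hSpos hSD

end Contracting

theorem lower_output_le_secant_general (n : ℕ) (p q : ℕ → ℝ)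
    (hc : Contracting n p q) :
    ∀ L U a : ℝ, 0 < L → L ≤ a → a ≤ U →
      lowerOut n p L U (a ^ n) ≤
      L + (a ^ n - L ^ n) / (∑ i ∈ Finset.range n, L ^ (n-1-i) * U ^ i) := by
  intro L U a hL hLa haU
  rw [hc.lowerOut_eq hL (hLa.trans haU)]
  exact add_le_add_right (hc.div_lowerDen_le_div_secantDen hL hLa haU) L

theorem lower_output_le_secant (n : ℕ) (hn : 2 ≤ n) (p q : ℕ → ℝ)
    (hc : Contracting n p q) :
    ∀ L U a : ℝ, 0 < L → L ≤ a → a ≤ U →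
      lowerOut n p L U (a ^ n) ≤
      L + (a ^ n - L ^ n) / (∑ i ∈ Finset.range n, L ^ (n-1-i) * U ^ i) :=
  lower_output_le_secant_general n p q hc
end

section
/- Let n ≥ 2 be an integer and let p = (p_0,…,p_{2n}) and q = (q_0,…,q_{2n}) be real coefficient vectors such that the n-th degree map R_{p,q} is contracting. Then for all reals L, U, a with 0 < L ≤ a ≤ U and x = a^n, the upper output U′ of R_{p,q} satisfies U* ≤ U′, where U* = U + (x − U^n)/(n·U^{n-1}) is the upper output of the Secant–Newton map. -/
open Filter Set Topology

theorem HasDerivWithinAt.le_of_eventually_slope_le {f : ℝ → ℝ} {f' x r : ℝ}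
    (hf : HasDerivWithinAt f f' (Iio x) x) (h : ∀ᶠ b in 𝓝[<] x, slope f x b ≤ r) : f' ≤ r :=
  le_of_tendsto ((hasDerivWithinAt_iff_tendsto_slope' self_notMem_Iio).mp hf) h

noncomputable def upperDen (n : ℕ) (q : ℕ → ℝ) (L U : ℝ) : ℝ :=
  ∑ i ∈ Finset.range n, q (n+1+i) * U ^ (n-1-i) * L ^ i

theorem upperOut_sub_upperOut (n : ℕ) (q : ℕ → ℝ) (L U x y : ℝ) :
    upperOut n q L U x - upperOut n q L U y = (x - y) / upperDen n q L U := by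
  simp only [upperOut, upperDen]
  ring

section Contracting

variable {n : ℕ} {p q : ℕ → ℝ} {L U : ℝ}

theorem Contracting.upperOut_pow_self (hc : Contracting n p q) (hL : 0 < L) (hLU : L ≤ U) :
    upperOut n q L U (U ^ n) = U :=
  have h := (hc L U U hL hLU le_rfl).2.2
  le_antisymm h.2 h.1

theorem Contracting.upperOut_eq (hc : Contracting n p q) (hL : 0 < L) (hLU : L ≤ U) (x : ℝ) :
    upperOut n q L U x = U + (x - U ^ n) / upperDen n q L U := by
  rw [← upperOut_sub_upperOut, hc.upperOut_pow_self hL hLU, add_sub_cancel]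

theorem Contracting.slope_pow_le_upperDen (hc : Contracting n p q) (hL : 0 < L)
    (hD : 0 < upperDen n q L U) {b : ℝ} (hLb : L ≤ b) (hbU : b < U) :
    slope (· ^ n) U b ≤ upperDen n q L U := by
  have hb : b ≤ U + (b ^ n - U ^ n) / upperDen n q L U := by
    rw [← hc.upperOut_eq hL (hLb.trans hbU.le)]
    exact (hc L U b hL hLb hbU.le).2.2.1
  rw [slope_def_field, div_le_iff_of_neg (sub_neg.mpr hbU), ← le_div_iff₀' hD]
  linarith

theorem Contracting.natCast_mul_pow_le_upperDen (hc : Contracting n p q) (hL : 0 < L)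
    (hLU : L < U) (hD : 0 < upperDen n q L U) :
    (n : ℝ) * U ^ (n - 1) ≤ upperDen n q L U :=
  (hasDerivAt_pow n U).hasDerivWithinAt.le_of_eventually_slope_le <|
    eventually_of_mem (Ioo_mem_nhdsLT hLU) fun _ hb ↦
      hc.slope_pow_le_upperDen hL hD hb.1.le hb.2

end Contracting

theorem secant_le_upper_output_general (n : ℕ) (p q : ℕ → ℝ)
    (hc : Contracting n p q) :
    ∀ L U a : ℝ, 0 < L → L ≤ a → a ≤ U →
      U + (a ^ n - U ^ n) / ((n : ℝ) * U ^ (n-1)) ≤ upperOut n q L U (a ^ n) := by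
  intro L U a hL hLa haU
  rw [hc.upperOut_eq hL (hLa.trans haU), add_le_add_iff_left]
  have hU : 0 < U := hL.trans_le (hLa.trans haU)
  have hpow : a ^ n - U ^ n ≤ 0 := sub_nonpos.mpr (pow_le_pow_left₀ (hL.trans_le hLa).le haU n)
  rcases haU.eq_or_lt with rfl | haU
  · simp
  rcases le_or_gt (upperDen n q L U) 0 with hD | hD
  · exact (div_nonpos_of_nonpos_of_nonneg hpow (by positivity)).trans
      (div_nonneg_of_nonpos hpow hD)
  have hn : n ≠ 0 := by
    rintro rfl
    simp [upperDen] at hD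
  have hle := div_le_div_of_nonneg_left (neg_nonneg.mpr hpow) (by positivity)
    (hc.natCast_mul_pow_le_upperDen hL (hLa.trans_lt haU) hD)
  simpa only [neg_div, neg_le_neg_iff] using hle

theorem secant_le_upper_output (n : ℕ) (hn : 2 ≤ n) (p q : ℕ → ℝ)
    (hc : Contracting n p q) :
    ∀ L U a : ℝ, 0 < L → L ≤ a → a ≤ U →
      U + (a ^ n - U ^ n) / ((n : ℝ) * U ^ (n-1)) ≤ upperOut n q L U (a ^ n) :=
  secant_le_upper_output_general n p q hc
end

section
/- Let n ≥ 2 be an integer and let p = (p_0,…,p_{2n}) and q = (q_0,…,q_{2n}) be real coefficient vectors such that the n-th degree map R_{p,q} is contracting and (q_{n+1},…,q_{2n}) ≠ (n,0,…,0). Then for all reals L, U, a with 0 < L ≤ a ≤ U, x = a^n, and (x − U^n)·((q_{n+1} − n) U^{n-1} + ∑_{i=1}^{n-1} q_{n+1+i} U^{n-1-i} L^i) ≠ 0, the upper output U′ of R_{p,q} is strictly greater than the Secant–Newton upper output U* = U + (x − U^n)/(n·U^{n-1}); in particular the Secant–Newton output interval is a proper subset of the output interval of R_{p,q}. -/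
open Finset

lemma add_div_eq_sub_div_of_add_div_eq_zero {K : Type*} [DivisionRing K] {c s d : K}
    (h : (c + s) / d = 0) (x : K) : (x + s) / d = (x - c) / d := by
  rcases div_eq_zero_iff.1 h with h | rfl
  · rw [eq_neg_of_add_eq_zero_right h, sub_eq_add_neg]
  · simp only [div_zero]

noncomputable def lowerDenom (n : ℕ) (p : ℕ → ℝ) (L U : ℝ) : ℝ :=
  ∑ i ∈ range n, p (n+1+i) * L ^ (n-1-i) * U ^ i

noncomputable def upperDenom (n : ℕ) (q : ℕ → ℝ) (L U : ℝ) : ℝ :=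
  ∑ i ∈ range n, q (n+1+i) * U ^ (n-1-i) * L ^ i

lemma upperDenom_sub_nat_mul_pow {n : ℕ} (hn : n ≠ 0) (q : ℕ → ℝ) (L U : ℝ) :
    upperDenom n q L U - n * U ^ (n-1) =
      (q (n+1) - n) * U ^ (n-1) + ∑ i ∈ Ico 1 n, q (n+1+i) * U ^ (n-1-i) * L ^ i := by
  rw [upperDenom, sum_range_eq_add_Ico _ (Nat.pos_of_ne_zero hn)]
  simp only [add_zero, Nat.sub_zero, pow_zero, mul_one]
  ring

section Contracting

variable {n : ℕ} {p q : ℕ → ℝ} {L U : ℝ}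

lemma lowerOut_eq_of_contracting (hc : Contracting n p q) (hL : 0 < L) (hLU : L ≤ U) (x : ℝ) :
    lowerOut n p L U x = L + (x - L ^ n) / lowerDenom n p L U := by
  have h := hc L U L hL le_rfl hLU
  have hfix : lowerOut n p L U (L ^ n) = L := le_antisymm h.2.1 h.1
  unfold lowerOut at hfix ⊢
  rw [add_div_eq_sub_div_of_add_div_eq_zero (add_eq_left.1 hfix)]
  rfl

lemma upperOut_eq_of_contracting (hc : Contracting n p q) (hL : 0 < L) (hLU : L ≤ U) (x : ℝ) :
    upperOut n q L U x = U + (x - U ^ n) / upperDenom n q L U := by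
  have h := hc L U U hL hLU le_rfl
  have hfix : upperOut n q L U (U ^ n) = U := le_antisymm h.2.2.2 h.2.2.1
  unfold upperOut at hfix ⊢
  rw [add_div_eq_sub_div_of_add_div_eq_zero (add_eq_left.1 hfix)]
  rfl

lemma geom_sum₂_mul_upperDenom_inv_le_one (hc : Contracting n p q) (hL : 0 < L) {a : ℝ}
    (hLa : L ≤ a) (haU : a < U) :
    (∑ i ∈ range n, a ^ i * U ^ (n-1-i)) * (upperDenom n q L U)⁻¹ ≤ 1 := by
  have h := (hc L U a hL hLa haU.le).2.2.1
  rw [upperOut_eq_of_contracting hc hL (hLa.trans haU.le), ← geom_sum₂_mul, div_eq_mul_inv] at h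
  refine le_of_mul_le_mul_left ?_ (sub_pos.2 haU)
  linear_combination h

lemma nat_mul_pow_mul_upperDenom_inv_le_one (hc : Contracting n p q) (hL : 0 < L) (hLU : L < U) :
    n * U ^ (n-1) * (upperDenom n q L U)⁻¹ ≤ 1 := by
  have hclosed :
      IsClosed {a : ℝ | (∑ i ∈ range n, a ^ i * U ^ (n-1-i)) * (upperDenom n q L U)⁻¹ ≤ 1} :=
    isClosed_le (by fun_prop) continuous_const
  have hsub := closure_minimal (s := Set.Ico L U)
    (fun a ha => geom_sum₂_mul_upperDenom_inv_le_one hc hL ha.1 ha.2) hclosed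
  rw [closure_Ico hLU.ne] at hsub
  rw [← geom_sum₂_self]
  exact hsub ⟨hLU.le, le_rfl⟩

lemma geom_sum₂_mul_lowerDenom_inv_le_one (hc : Contracting n p q) (hL : 0 < L) (hLU : L < U) :
    (∑ i ∈ range n, L ^ (n-1-i) * U ^ i) * (lowerDenom n p L U)⁻¹ ≤ 1 := by
  have h := (hc L U U hL hLU.le le_rfl).2.1
  rw [lowerOut_eq_of_contracting hc hL hLU.le, ← geom_sum₂_mul, div_eq_mul_inv] at h
  simp_rw [mul_comm (L ^ _)]
  refine le_of_mul_le_mul_left ?_ (sub_pos.2 hLU)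
  linear_combination h

lemma lowerOut_le_secant (hc : Contracting n p q) (hn : n ≠ 0) (hL : 0 < L) (hLU : L < U)
    {a : ℝ} (hLa : L ≤ a) :
    lowerOut n p L U (a ^ n) ≤ L + (a ^ n - L ^ n) / ∑ i ∈ range n, L ^ (n-1-i) * U ^ i := by
  have hU : 0 < U := hL.trans hLU
  have hsecant : 0 < ∑ i ∈ range n, L ^ (n-1-i) * U ^ i :=
    sum_pos (fun i _ => by positivity) (nonempty_range_iff.2 hn)
  have hinv : (lowerDenom n p L U)⁻¹ ≤ (∑ i ∈ range n, L ^ (n-1-i) * U ^ i)⁻¹ := by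
    simpa using (le_inv_mul_iff₀ hsecant).2 (geom_sum₂_mul_lowerDenom_inv_le_one hc hL hLU)
  rw [lowerOut_eq_of_contracting hc hL hLU.le, div_eq_mul_inv, div_eq_mul_inv]
  gcongr
  exact sub_nonneg.2 (pow_le_pow_left₀ hL.le hLa n)

lemma newton_lt_upperOut (hc : Contracting n p q) (hn : n ≠ 0) (hL : 0 < L) {a : ℝ}
    (hLa : L ≤ a) (haU : a < U) (hD : upperDenom n q L U ≠ n * U ^ (n-1)) :
    U + (a ^ n - U ^ n) / (n * U ^ (n-1)) < upperOut n q L U (a ^ n) := by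
  have hU : 0 < U := hL.trans_le (hLa.trans haU.le)
  have hnewton : (0 : ℝ) < n * U ^ (n-1) := by positivity
  have hinv : (upperDenom n q L U)⁻¹ < (n * U ^ (n-1))⁻¹ := by
    refine lt_of_le_of_ne ?_ (inv_injective.ne hD)
    simpa using (le_inv_mul_iff₀ hnewton).2
      (nat_mul_pow_mul_upperDenom_inv_le_one hc hL (hLa.trans_lt haU))
  have hx : a ^ n - U ^ n < 0 := sub_neg.2 (pow_lt_pow_left₀ haU (hL.le.trans hLa) hn)
  rw [upperOut_eq_of_contracting hc hL (hLa.trans haU.le), div_eq_mul_inv, div_eq_mul_inv]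
  exact (add_lt_add_iff_left U).2 (mul_lt_mul_of_neg_left hinv hx)

end Contracting

theorem secant_newton_strictly_better_upper_general (n : ℕ) (p q : ℕ → ℝ)
    (hc : Contracting n p q) :
    ∀ L U a : ℝ, 0 < L → L ≤ a → a ≤ U →
      (a ^ n - U ^ n) *
        ((q (n+1) - (n : ℝ)) * U ^ (n-1) +
          ∑ i ∈ Finset.Ico 1 n, q (n+1+i) * U ^ (n-1-i) * L ^ i) ≠ 0 →
      U + (a ^ n - U ^ n) / ((n : ℝ) * U ^ (n-1)) < upperOut n q L U (a ^ n) ∧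
      Set.Icc (L + (a ^ n - L ^ n) / (∑ i ∈ Finset.range n, L ^ (n-1-i) * U ^ i))
              (U + (a ^ n - U ^ n) / ((n : ℝ) * U ^ (n-1))) ⊂
        Set.Icc (lowerOut n p L U (a ^ n)) (upperOut n q L U (a ^ n)) := by
  intro L U a hL hLa haU hside
  obtain ⟨hx, hD⟩ := mul_ne_zero_iff.1 hside
  have hn : n ≠ 0 := by rintro rfl; simp at hx
  have haU' : a < U := haU.lt_of_ne (by rintro rfl; simp at hx)
  have hupper := newton_lt_upperOut hc hn hL hLa haU'
    (sub_ne_zero.1 (by rwa [upperDenom_sub_nat_mul_pow hn]))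
  have hca := hc L U a hL hLa haU
  exact ⟨hupper, Set.Icc_ssubset_Icc_right (hca.2.1.trans hca.2.2.1)
    (lowerOut_le_secant hc hn hL (hLa.trans_lt haU') hLa) hupper⟩

theorem secant_newton_strictly_better_upper (n : ℕ) (hn : 2 ≤ n) (p q : ℕ → ℝ)
    (hc : Contracting n p q)
    (hq : ¬ (q (n+1) = (n : ℝ) ∧ ∀ i : ℕ, 1 ≤ i → i ≤ n - 1 → q (n+1+i) = 0)) :
    ∀ L U a : ℝ, 0 < L → L ≤ a → a ≤ U →
      (a ^ n - U ^ n) *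
        ((q (n+1) - (n : ℝ)) * U ^ (n-1) +
          ∑ i ∈ Finset.Ico 1 n, q (n+1+i) * U ^ (n-1-i) * L ^ i) ≠ 0 →
      U + (a ^ n - U ^ n) / ((n : ℝ) * U ^ (n-1)) < upperOut n q L U (a ^ n) ∧
      Set.Icc (L + (a ^ n - L ^ n) / (∑ i ∈ Finset.range n, L ^ (n-1-i) * U ^ i))
              (U + (a ^ n - U ^ n) / ((n : ℝ) * U ^ (n-1))) ⊂
        Set.Icc (lowerOut n p L U (a ^ n)) (upperOut n q L U (a ^ n)) :=
  secant_newton_strictly_better_upper_general n p q hc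
end
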